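/- Let g, h : (0,∞) → ℂ be measurable, let c ∈ ℝ and α ∈ ℂ. Assume: (i) g is continuous and x ↦ |g(x)| x^{c−1} is integrable on (0,∞); (ii) t ↦ g̃(c+it) is integrable on ℝ, where g̃ denotes the Mellin transform of g; (iii) x ↦ |h(x)| x^{Re α − c − 1} is integrable on (0,∞); (iv) x ↦ |g(x) h(x)| x^{Re α − 1} is integrable on (0,∞). Then the Parseval formula for Mellin transforms holds: ∫₀^∞ g(x) h(x) x^{α−1} dx = (1/2π) ∫_ℝ g̃(c+it) · h̃(α − c − it) dt. -/

import Mathlib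

/-!
Mellin inversion on the line `Re s = c` writes `g x` as `(1/2π) ∫ g̃(c+it) x^{-c-it} dt`.
Inserting this into `∫₀^∞ g h x^{α-1} dx` and exchanging the two integrals turns the inner
`x`-integral into the Mellin transform `h̃(α-c-it)`. The exchange is justified by Fubini, since
`|g̃(c+it) h(x) x^{α-c-it-1}| = |g̃(c+it)| · |h(x)| x^{Re α-c-1}` is a product of two integrable
functions.
-/

open MeasureTheory Set Complex Real

theorem mellin_eq_setIntegral_mul (f : ℝ → ℂ) (s : ℂ) :
    mellin f s = ∫ x in Ioi (0 : ℝ), f x * (x : ℂ) ^ (s - 1) :=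
  setIntegral_congr_fun measurableSet_Ioi fun _ _ => mul_comm _ _

theorem mellinConvergent_of_integrableOn_norm_mul_rpow {f : ℝ → ℂ} {s : ℂ}
    (hfm : AEStronglyMeasurable f (volume.restrict (Ioi 0)))
    (hf : IntegrableOn (fun x : ℝ => ‖f x‖ * x ^ (s.re - 1)) (Ioi 0)) :
    MellinConvergent f s := by
  rw [MellinConvergent, mellin_convergent_iff_norm subset_rfl measurableSet_Ioi hfm]
  exact hf.congr_fun (fun _ _ => mul_comm _ _) measurableSet_Ioi

theorem integrable_prod_mul_cpow_smul {F h : ℝ → ℂ} {β : ℂ} (hF : Integrable F)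
    (hhm : AEStronglyMeasurable h (volume.restrict (Ioi 0)))
    (hh : IntegrableOn (fun x : ℝ => ‖h x‖ * x ^ (β.re - 1)) (Ioi 0)) :
    Integrable (fun z : ℝ × ℝ => F z.2 * ((z.1 : ℂ) ^ (β - z.2 * I - 1) • h z.1))
      ((volume.restrict (Ioi 0)).prod volume) := by
  have hmeas : AEStronglyMeasurable
      (fun z : ℝ × ℝ => F z.2 * ((z.1 : ℂ) ^ (β - z.2 * I - 1) • h z.1))
      ((volume.restrict (Ioi 0)).prod volume) :=
    hF.aestronglyMeasurable.comp_snd.mul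
      ((by fun_prop : Measurable fun z : ℝ × ℝ => (z.1 : ℂ) ^ (β - z.2 * I - 1))
        |>.aestronglyMeasurable.smul hhm.comp_fst)
  refine (hh.mul_prod hF.norm).mono' hmeas ?_
  filter_upwards [Measure.quasiMeasurePreserving_fst.ae (ae_restrict_mem measurableSet_Ioi)]
    with z (hz : 0 < z.1)
  have hre : (β - z.2 * I - 1).re = β.re - 1 := by simp
  rw [norm_mul, norm_smul, norm_cpow_eq_rpow_re_of_pos hz, hre]
  exact le_of_eq (by ring)

theorem setIntegral_mellinInv_mul_mul_cpow {F : ℂ → ℂ} {h : ℝ → ℂ} {c : ℝ} {α : ℂ}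
    (hF : VerticalIntegrable F c) (hhm : AEStronglyMeasurable h (volume.restrict (Ioi 0)))
    (hh : IntegrableOn (fun x : ℝ => ‖h x‖ * x ^ (α.re - c - 1)) (Ioi 0)) :
    ∫ x in Ioi (0 : ℝ), mellinInv c F x * h x * (x : ℂ) ^ (α - 1) =
      (1 / (2 * π)) • ∫ t : ℝ, F (c + t * I) * mellin h (α - c - t * I) := by
  set K : ℝ → ℝ → ℂ := fun x t => F (c + t * I) * ((x : ℂ) ^ (α - c - t * I - 1) • h x)
  have hK : Integrable (Function.uncurry K) ((volume.restrict (Ioi 0)).prod volume) :=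
    integrable_prod_mul_cpow_smul (β := α - c) hF hhm (by simpa [sub_sub] using hh)
  have hpointwise : ∀ x ∈ Ioi (0 : ℝ),
      mellinInv c F x * h x * (x : ℂ) ^ (α - 1) = (1 / (2 * π)) • ∫ t : ℝ, K x t := by
    intro x (hx : 0 < x)
    have hx0 : (x : ℂ) ≠ 0 := ofReal_ne_zero.2 hx.ne'
    rw [mellinInv, smul_mul_assoc, smul_mul_assoc, ← integral_mul_const, ← integral_mul_const]
    congr 1
    refine integral_congr_ae (Filter.Eventually.of_forall fun t => ?_)
    have hpow : (x : ℂ) ^ (-(c + t * I)) * (x : ℂ) ^ (α - 1) = (x : ℂ) ^ (α - c - t * I - 1) := by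
      rw [← cpow_add _ _ hx0]; ring_nf
    simp only [K, smul_eq_mul, ← hpow]
    ring
  calc ∫ x in Ioi (0 : ℝ), mellinInv c F x * h x * (x : ℂ) ^ (α - 1)
      = (1 / (2 * π)) • ∫ x in Ioi (0 : ℝ), ∫ t : ℝ, K x t := by
        rw [setIntegral_congr_fun measurableSet_Ioi hpointwise, integral_smul]
    _ = (1 / (2 * π)) • ∫ t : ℝ, ∫ x in Ioi (0 : ℝ), K x t := by
        rw [integral_integral_swap hK]
    _ = (1 / (2 * π)) • ∫ t : ℝ, F (c + t * I) * mellin h (α - c - t * I) := by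
        simp only [K, integral_const_mul, mellin]

theorem mellin_parseval_general (g h : ℝ → ℂ) (c : ℝ) (α : ℂ)
    (hgc : ContinuousOn g (Ioi 0)) (hhm : Measurable h)
    (hg1 : IntegrableOn (fun x : ℝ => ‖g x‖ * x ^ (c - 1)) (Ioi 0))
    (hg2 : Integrable
      (fun t : ℝ => ∫ x in Ioi (0 : ℝ), g x * (x : ℂ) ^ ((c : ℂ) + t * Complex.I - 1)))
    (hh : IntegrableOn (fun x : ℝ => ‖h x‖ * x ^ (α.re - c - 1)) (Ioi 0)) :
    ∫ x in Ioi (0 : ℝ), g x * h x * (x : ℂ) ^ (α - 1) =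
      (1 / (2 * (Real.pi : ℂ))) *
        ∫ t : ℝ, (∫ x in Ioi (0 : ℝ), g x * (x : ℂ) ^ ((c : ℂ) + t * Complex.I - 1)) *
          ∫ x in Ioi (0 : ℝ), h x * (x : ℂ) ^ ((α - c - t * Complex.I) - 1) := by
  have hgm : AEStronglyMeasurable g (volume.restrict (Ioi 0)) :=
    hgc.aestronglyMeasurable measurableSet_Ioi
  have hconv : MellinConvergent g c :=
    mellinConvergent_of_integrableOn_norm_mul_rpow hgm (by simpa using hg1)
  have hvert : VerticalIntegrable (mellin g) c := by
    simpa only [VerticalIntegrable, mellin_eq_setIntegral_mul] using hg2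
  have hinv : ∀ x ∈ Ioi (0 : ℝ), g x = mellinInv c (mellin g) x := fun x (hx : 0 < x) =>
    (mellinInv_mellin_eq c g hx hconv hvert (hgc.continuousAt (Ioi_mem_nhds hx))).symm
  rw [setIntegral_congr_fun measurableSet_Ioi fun x hx => by rw [hinv x hx],
    setIntegral_mellinInv_mul_mul_cpow hvert hhm.aestronglyMeasurable hh, real_smul]
  simp only [mellin_eq_setIntegral_mul]
  push_cast
  ring

/-- **Parseval formula for Mellin transforms.**
Assume `g` is continuous on `(0,∞)` with `x ↦ |g x| x^{c-1}` integrable, its Mellin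
transform `t ↦ g̃(c+it)` is integrable on `ℝ`, `h` is measurable with
`x ↦ |h x| x^{Re α - c - 1}` integrable, and `x ↦ |g x · h x| x^{Re α - 1}` integrable.
Then `∫₀^∞ g(x) h(x) x^{α-1} dx = (1/2π) ∫_ℝ g̃(c+it) h̃(α-c-it) dt`. -/
theorem mellin_parseval (g h : ℝ → ℂ) (c : ℝ) (α : ℂ)
    (hgc : ContinuousOn g (Ioi 0)) (hhm : Measurable h)
    (hg1 : IntegrableOn (fun x : ℝ => ‖g x‖ * x ^ (c - 1)) (Ioi 0))
    (hg2 : Integrable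
      (fun t : ℝ => ∫ x in Ioi (0 : ℝ), g x * (x : ℂ) ^ ((c : ℂ) + t * Complex.I - 1)))
    (hh : IntegrableOn (fun x : ℝ => ‖h x‖ * x ^ (α.re - c - 1)) (Ioi 0))
    (hgh : IntegrableOn (fun x : ℝ => ‖g x * h x‖ * x ^ (α.re - 1)) (Ioi 0)) :
    ∫ x in Ioi (0 : ℝ), g x * h x * (x : ℂ) ^ (α - 1) =
      (1 / (2 * (Real.pi : ℂ))) *
        ∫ t : ℝ, (∫ x in Ioi (0 : ℝ), g x * (x : ℂ) ^ ((c : ℂ) + t * Complex.I - 1)) *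
          ∫ x in Ioi (0 : ℝ), h x * (x : ℂ) ^ ((α - c - t * Complex.I) - 1) :=
  mellin_parseval_general g h c α hgc hhm hg1 hg2 hh
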